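/- arXiv:1408.1296 — 2 statements merged into one kernel-verified Lean document; each statement's English description precedes it below -/
import Mathlib

section
/- Let X_1,...,X_n be n real-valued random variables with maximum X_{n:n} = max(X_1,...,X_n), and assume condition (v1): lim_{x→∞} P(X_i > x, X_j > x)/P(X_{n:n} > x) = 0 for all 1 ≤ i < j ≤ n. If X_i is dominatedly varying (X_i ∈ 𝓓) for every 1 ≤ i ≤ n, then X_{n:n} ∈ 𝓓. -/
open MeasureTheory Filter Topology Asymptotics

noncomputable section

/-- Tail probability `P(Y > x)` of a real random variable. -/
def tailP {Ω : Type*} [MeasurableSpace Ω] (μ : Measure Ω) (Y : Ω → ℝ) (x : ℝ) : ℝ :=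
  (μ {ω | x < Y ω}).toReal

/-- The maximum `X_{n:n}` of finitely many random variables. -/
def maxRV {Ω : Type*} {n : ℕ} (X : Fin n → Ω → ℝ) (ω : Ω) : ℝ := ⨆ i, X i ω

/-- The `i`-th largest value (descending order statistic, `0`-indexed):
`ordDesc X i = X_{n-i:n}`. -/
def ordDesc {Ω : Type*} {n : ℕ} (X : Fin n → Ω → ℝ) (i : Fin n) (ω : Ω) : ℝ :=
  (((List.ofFn fun j => X j ω).mergeSort fun a b => decide (b ≤ a)).getD i 0)

/-- A tail function `T = 1 - F` is long-tailed (`F ∈ 𝓛`). -/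
def LongTailedT (T : ℝ → ℝ) : Prop :=
  (∀ x : ℝ, 0 ≤ x → 0 < T x) ∧
  ∀ y : ℝ, Tendsto (fun x => T (x + y) / T x) atTop (𝓝 1)

/-- A function is dominatedly varying. -/
def DomVarFun (h : ℝ → ℝ) : Prop :=
  ∀ y : ℝ, 0 < y →
    (0 : EReal) < atTop.liminf (fun x => ((h (x * y) / h x : ℝ) : EReal)) ∧
    atTop.limsup (fun x => ((h (x * y) / h x : ℝ) : EReal)) < ⊤

/-- A function is weakly self-neglecting. -/
def WeaklySelfNeg (h : ℝ → ℝ) : Prop :=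
  ∀ y : ℝ, atTop.limsup (fun x => ((h (x + y * h x) / h x : ℝ) : EReal)) < ⊤

/-- `h ∈ 𝓗_F` where `T = 1 - F` is the tail of `F`. -/
def MemScaleClass (T h : ℝ → ℝ) : Prop :=
  (∀ᶠ x in atTop, 0 < h x) ∧
  (h =o[atTop] fun x : ℝ => x) ∧
  (∀ y : ℝ, Tendsto (fun x => T (x + y * h x) / T x) atTop (𝓝 1)) ∧
  WeaklySelfNeg h

/-- Upper endpoint `x_F = sup {x : F(x) < 1}` of a distribution with tail `T = 1 - F`. -/
def upEnd (T : ℝ → ℝ) : EReal := sSup ((fun x : ℝ => (x : EReal)) '' {x | 0 < T x})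

open Classical in
/-- The filter of "`x → x_F`". -/
def endFilter (T : ℝ → ℝ) : Filter ℝ :=
  if upEnd T = ⊤ then atTop else 𝓝[<] (upEnd T).toReal

/-- `F ∈ GMDA(h)` for `T = 1 - F`. -/
def MemGMDA (T h : ℝ → ℝ) : Prop :=
  (∀ x, 0 < h x) ∧
  ∀ y : ℝ, Tendsto (fun x => T (x + y * h x) / T x) (endFilter T) (𝓝 (Real.exp (-y)))

/-- Condition (DS1) (for all `t > 0`). -/
def DS1 {Ω : Type*} [MeasurableSpace Ω] (μ : Measure Ω) {n : ℕ} (X : Fin n → Ω → ℝ)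
    (h : ℝ → ℝ) : Prop :=
  ∀ t : ℝ, 0 < t → ∀ i j : Fin n, i ≠ j →
    Tendsto (fun x => (μ {ω | t * h x < |X i ω| ∧ x < X j ω}).toReal / tailP μ (maxRV X) x)
      atTop (𝓝 0)

/-- Condition (DS2) for a given `L > 0`. -/
def DS2 {Ω : Type*} [MeasurableSpace Ω] (μ : Measure Ω) {n : ℕ} (X : Fin n → Ω → ℝ)
    (h : ℝ → ℝ) (L : ℝ) : Prop :=
  ∀ i j : Fin n, i < j →
    Tendsto (fun x => (μ {ω | L * h x < X i ω ∧ L * h x < X j ω}).toReal / tailP μ (maxRV X) x)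
      atTop (𝓝 0)

/-- Condition (v1). -/
def CondV1 {Ω : Type*} [MeasurableSpace Ω] (μ : Measure Ω) {n : ℕ} (X : Fin n → Ω → ℝ) : Prop :=
  ∀ i j : Fin n, i < j →
    Tendsto (fun x => (μ {ω | x < X i ω ∧ x < X j ω}).toReal / tailP μ (maxRV X) x)
      atTop (𝓝 0)

/-- Assumption A: `X_{n:n}` has an infinite upper endpoint, `X_{n:n} ∈ GMDA(h)`,
(DS1) holds for all `t > 0` and (DS2) for some `L > 0`. -/
def AssumptionA {Ω : Type*} [MeasurableSpace Ω] (μ : Measure Ω) {n : ℕ}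
    (X : Fin n → Ω → ℝ) : Prop :=
  ∃ h : ℝ → ℝ,
    (∀ x : ℝ, 0 < tailP μ (maxRV X) x) ∧
    MemGMDA (tailP μ (maxRV X)) h ∧
    DS1 μ X h ∧ ∃ L : ℝ, 0 < L ∧ DS2 μ X h L

/-- Assumption B: `X_{n:n} ∈ 𝓛` and some `h ∈ 𝓗_{X_{n:n}}` satisfies (DS1) for all `t > 0`
and (DS2) for some `L > 0`. -/
def AssumptionB {Ω : Type*} [MeasurableSpace Ω] (μ : Measure Ω) {n : ℕ}
    (X : Fin n → Ω → ℝ) : Prop :=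
  LongTailedT (tailP μ (maxRV X)) ∧
  ∃ h : ℝ → ℝ, MemScaleClass (tailP μ (maxRV X)) h ∧
    DS1 μ X h ∧ ∃ L : ℝ, 0 < L ∧ DS2 μ X h L

/-- Assumption C: `X_{n:n} ∈ 𝓛 ∩ 𝓓` and some dominatedly varying `h ∈ 𝓗_{X_{n:n}}`
satisfies (DS1) for all `t > 0`. -/
def AssumptionC {Ω : Type*} [MeasurableSpace Ω] (μ : Measure Ω) {n : ℕ}
    (X : Fin n → Ω → ℝ) : Prop :=
  LongTailedT (tailP μ (maxRV X)) ∧ DomVarFun (tailP μ (maxRV X)) ∧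
  ∃ h : ℝ → ℝ, DomVarFun h ∧ MemScaleClass (tailP μ (maxRV X)) h ∧ DS1 μ X h

/-- The uniform (in the weights `c ∈ K`) max-sum asymptotic equivalence (max-sum0):
`P(∑ c_i X_{n-i:n} > x) ~ P(c_0 X_{n:n} > x) ~ ∑ P(c_0 X_i > x)` uniformly on `K`. -/
def UnifMaxSum {Ω : Type*} [MeasurableSpace Ω] (μ : Measure Ω) {n : ℕ} [NeZero n]
    (X : Fin n → Ω → ℝ) (K : Set (Fin n → ℝ)) : Prop :=
  TendstoUniformlyOn
    (fun x (c : Fin n → ℝ) =>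
      tailP μ (fun ω => ∑ i, c i * ordDesc X i ω) x /
        tailP μ (fun ω => c 0 * maxRV X ω) x) 1 atTop K ∧
  TendstoUniformlyOn
    (fun x (c : Fin n → ℝ) =>
      tailP μ (fun ω => c 0 * maxRV X ω) x /
        ∑ i, tailP μ (fun ω => c 0 * X i ω) x) 1 atTop K

end

/-! Writing `T` for the tail of `X_{n:n}` and `T_i` for those of the `X_i`, one has
`max_i T_i ≤ T ≤ ∑_i T_i ≤ n · T`, so `T` is `Θ`-equivalent to `∑_i T_i`. Dominated variation
passes to finite sums of nonnegative functions and is invariant under `Θ`-equivalence. -/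

lemma exists_pos_eventually_le_of_liminf_pos {α : Type*} {l : Filter α} {f : α → ℝ}
    (h : (0 : EReal) < l.liminf (fun x => (f x : EReal))) :
    ∃ c : ℝ, 0 < c ∧ ∀ᶠ x in l, c ≤ f x := by
  obtain ⟨b, hb0, hbl⟩ := exists_between h
  lift b to ℝ using ⟨(hbl.trans_le le_top).ne, (bot_le.trans_lt hb0).ne'⟩
  refine ⟨b, mod_cast hb0, ?_⟩
  filter_upwards [eventually_lt_of_lt_liminf hbl] with x hx
  exact_mod_cast hx.le

lemma exists_eventually_le_of_limsup_lt_top {α : Type*} {l : Filter α} {f : α → ℝ}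
    (h : l.limsup (fun x => (f x : EReal)) < ⊤) :
    ∃ C : ℝ, ∀ᶠ x in l, f x ≤ C := by
  obtain ⟨b, hlb, hbt⟩ := exists_between h
  lift b to ℝ using ⟨hbt.ne, (bot_le.trans_lt hlb).ne'⟩
  refine ⟨b, ?_⟩
  filter_upwards [eventually_lt_of_limsup_lt hlb] with x hx
  exact_mod_cast hx.le

lemma domVarFun_iff_of_eventually_pos {h : ℝ → ℝ} (hpos : ∀ᶠ x in atTop, 0 < h x) :
    DomVarFun h ↔ ∀ y : ℝ, 0 < y → ∃ c C : ℝ, 0 < c ∧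
      ∀ᶠ x in atTop, c * h x ≤ h (x * y) ∧ h (x * y) ≤ C * h x := by
  constructor
  · intro hh y hy
    obtain ⟨c, hc, hlow⟩ := exists_pos_eventually_le_of_liminf_pos (hh y hy).1
    obtain ⟨C, hup⟩ := exists_eventually_le_of_limsup_lt_top (hh y hy).2
    refine ⟨c, C, hc, ?_⟩
    filter_upwards [hlow, hup, hpos] with x hl hu hx
    exact ⟨(le_div_iff₀ hx).mp hl, (div_le_iff₀ hx).mp hu⟩
  · intro hh y hy
    obtain ⟨c, C, hc, hbounds⟩ := hh y hy
    have hratio : ∀ᶠ x in atTop, c ≤ h (x * y) / h x ∧ h (x * y) / h x ≤ C := by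
      filter_upwards [hbounds, hpos] with x ⟨hl, hu⟩ hx
      exact ⟨(le_div_iff₀ hx).mpr hl, (div_le_iff₀ hx).mpr hu⟩
    constructor
    · refine (EReal.coe_pos.mpr hc).trans_le (le_liminf_of_le (by isBoundedDefault) ?_)
      filter_upwards [hratio] with x hx
      exact_mod_cast hx.1
    · refine lt_of_le_of_lt (limsup_le_of_le (by isBoundedDefault) ?_) (EReal.coe_lt_top C)
      filter_upwards [hratio] with x hx
      exact_mod_cast hx.2

lemma DomVarFun.eventually_pos {h : ℝ → ℝ} (hh : DomVarFun h) (h0 : ∀ᶠ x in atTop, 0 ≤ h x) :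
    ∀ᶠ x in atTop, 0 < h x := by
  obtain ⟨c, hc, hlow⟩ := exists_pos_eventually_le_of_liminf_pos (hh 1 one_pos).1
  filter_upwards [hlow, h0] with x hl hx
  refine hx.lt_of_ne fun hzero => ?_
  rw [← hzero, div_zero] at hl
  exact hc.not_ge hl

lemma DomVarFun.add {f g : ℝ → ℝ} (hf : DomVarFun f) (hg : DomVarFun g)
    (hf0 : ∀ᶠ x in atTop, 0 ≤ f x) (hg0 : ∀ᶠ x in atTop, 0 ≤ g x) :
    DomVarFun (fun x => f x + g x) := by
  have hfpos := hf.eventually_pos hf0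
  have hgpos := hg.eventually_pos hg0
  rw [domVarFun_iff_of_eventually_pos hfpos] at hf
  rw [domVarFun_iff_of_eventually_pos hgpos] at hg
  rw [domVarFun_iff_of_eventually_pos (by filter_upwards [hfpos, hgpos] with x hf hg; positivity)]
  intro y hy
  obtain ⟨c₁, C₁, hc₁, h₁⟩ := hf y hy
  obtain ⟨c₂, C₂, hc₂, h₂⟩ := hg y hy
  refine ⟨min c₁ c₂, max C₁ C₂, lt_min hc₁ hc₂, ?_⟩
  filter_upwards [h₁, h₂, hfpos, hgpos] with x ⟨hl₁, hu₁⟩ ⟨hl₂, hu₂⟩ hx₁ hx₂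
  constructor
  · nlinarith [min_le_left c₁ c₂, min_le_right c₁ c₂]
  · nlinarith [le_max_left C₁ C₂, le_max_right C₁ C₂]

lemma DomVarFun.finset_sum {ι : Type*} {f : ι → ℝ → ℝ} {s : Finset ι} (hs : s.Nonempty)
    (hf : ∀ i ∈ s, DomVarFun (f i)) (hf0 : ∀ i ∈ s, ∀ᶠ x in atTop, 0 ≤ f i x) :
    DomVarFun (fun x => ∑ i ∈ s, f i x) := by
  induction hs using Finset.Nonempty.cons_induction with
  | singleton a => simpa using hf a (Finset.mem_singleton_self a)
  | cons a s ha hs ih =>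
    simp only [Finset.mem_cons, forall_eq_or_imp] at hf hf0
    simp only [Finset.sum_cons]
    refine hf.1.add (ih hf.2 hf0.2) hf0.1 ?_
    filter_upwards [(Filter.eventually_all_finset s).mpr hf0.2] with x hx
    exact Finset.sum_nonneg hx

lemma DomVarFun.of_isTheta {f g : ℝ → ℝ} (hf : DomVarFun f) (hf0 : ∀ᶠ x in atTop, 0 ≤ f x)
    (hg0 : ∀ᶠ x in atTop, 0 ≤ g x) (hgf : g =Θ[atTop] f) : DomVarFun g := by
  obtain ⟨K, hK, hgK⟩ := hgf.1.exists_pos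
  obtain ⟨K', hK', hfK'⟩ := hgf.2.exists_pos
  have hg_le : ∀ᶠ x in atTop, g x ≤ K * f x := by
    filter_upwards [hgK.bound, hf0, hg0] with x hx hfx hgx
    simpa [abs_of_nonneg hfx, abs_of_nonneg hgx] using hx
  have hf_le : ∀ᶠ x in atTop, f x ≤ K' * g x := by
    filter_upwards [hfK'.bound, hf0, hg0] with x hx hfx hgx
    simpa [abs_of_nonneg hfx, abs_of_nonneg hgx] using hx
  have hfpos := hf.eventually_pos hf0
  have hgpos : ∀ᶠ x in atTop, 0 < g x := by
    filter_upwards [hfpos, hf_le] with x hfx hx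
    exact pos_of_mul_pos_right (hfx.trans_le hx) hK'.le
  rw [domVarFun_iff_of_eventually_pos hfpos] at hf
  rw [domVarFun_iff_of_eventually_pos hgpos]
  intro y hy
  obtain ⟨c, C, hc, hbounds⟩ := hf y hy
  have hmul : Tendsto (fun x => x * y) atTop atTop := tendsto_id.atTop_mul_const hy
  refine ⟨c / (K * K'), K * C * K', by positivity, ?_⟩
  filter_upwards [hbounds, hg_le, hf_le, hmul.eventually hg_le, hmul.eventually hf_le, hfpos]
    with x ⟨hl, hu⟩ hgx hfx hgxy hfxy hx
  have hC : 0 ≤ C := nonneg_of_mul_nonneg_left ((mul_pos hc hx).le.trans (hl.trans hu)) hx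
  constructor
  · have : c * g x ≤ K * K' * g (x * y) :=
      calc c * g x ≤ c * (K * f x) := by gcongr
        _ = K * (c * f x) := by ring
        _ ≤ K * (K' * g (x * y)) := mul_le_mul_of_nonneg_left (hl.trans hfxy) hK.le
        _ = K * K' * g (x * y) := by ring
    rw [div_mul_eq_mul_div, div_le_iff₀ (by positivity)]
    linarith
  · calc g (x * y) ≤ K * (C * f x) := hgxy.trans (by gcongr)
      _ ≤ K * (C * (K' * g x)) := by gcongr
      _ = K * C * K' * g x := by ring

section Tails

variable {Ω : Type*} {n : ℕ}

lemma le_maxRV (X : Fin n → Ω → ℝ) (i : Fin n) (ω : Ω) : X i ω ≤ maxRV X ω :=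
  Finite.le_ciSup (fun j => X j ω) i

lemma lt_maxRV_iff [NeZero n] {X : Fin n → Ω → ℝ} {ω : Ω} {x : ℝ} :
    x < maxRV X ω ↔ ∃ i, x < X i ω :=
  lt_ciSup_iff (Finite.bddAbove_range _)

variable [MeasurableSpace Ω]

lemma tailP_nonneg (μ : Measure Ω) (Y : Ω → ℝ) (x : ℝ) : 0 ≤ tailP μ Y x :=
  ENNReal.toReal_nonneg

lemma tailP_le_tailP_maxRV (μ : Measure Ω) [IsFiniteMeasure μ] (X : Fin n → Ω → ℝ)
    (i : Fin n) (x : ℝ) : tailP μ (X i) x ≤ tailP μ (maxRV X) x :=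
  measureReal_mono fun ω (hω : x < X i ω) => hω.trans_le (le_maxRV X i ω)

lemma tailP_maxRV_le_sum [NeZero n] (μ : Measure Ω) (X : Fin n → Ω → ℝ) (x : ℝ) :
    tailP μ (maxRV X) x ≤ ∑ i, tailP μ (X i) x := by
  have hset : {ω | x < maxRV X ω} = ⋃ i, {ω | x < X i ω} := by
    ext ω
    simpa using lt_maxRV_iff
  simpa only [tailP, ← measureReal_def, hset] using measureReal_iUnion_fintype_le _

lemma isTheta_tailP_maxRV_sum [NeZero n] (μ : Measure Ω) [IsFiniteMeasure μ]
    (X : Fin n → Ω → ℝ) (l : Filter ℝ) :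
    tailP μ (maxRV X) =Θ[l] fun x => ∑ i, tailP μ (X i) x := by
  have hsum_nonneg (x : ℝ) : 0 ≤ ∑ i, tailP μ (X i) x :=
    Finset.sum_nonneg fun i _ => tailP_nonneg μ (X i) x
  refine ⟨.of_bound' (.of_forall fun x => ?_), .of_bound n (.of_forall fun x => ?_)⟩
  · rw [Real.norm_of_nonneg (tailP_nonneg μ _ x), Real.norm_of_nonneg (hsum_nonneg x)]
    exact tailP_maxRV_le_sum μ X x
  · rw [Real.norm_of_nonneg (tailP_nonneg μ _ x), Real.norm_of_nonneg (hsum_nonneg x)]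
    calc ∑ i, tailP μ (X i) x ≤ ∑ _i : Fin n, tailP μ (maxRV X) x :=
          Finset.sum_le_sum fun i _ => tailP_le_tailP_maxRV μ X i x
      _ = n * tailP μ (maxRV X) x := by simp

end Tails

theorem max_dom_var_of_v1_general
    {Ω : Type*} [MeasurableSpace Ω] (μ : Measure Ω) [IsProbabilityMeasure μ]
    {n : ℕ} [NeZero n] (X : Fin n → Ω → ℝ)
    (hD : ∀ i, DomVarFun (tailP μ (X i))) :
    DomVarFun (tailP μ (maxRV X)) := by
  have htail_nonneg (Y : Ω → ℝ) : ∀ᶠ x in atTop, 0 ≤ tailP μ Y x :=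
    .of_forall (tailP_nonneg μ Y)
  have hsum : DomVarFun fun x => ∑ i, tailP μ (X i) x :=
    .finset_sum Finset.univ_nonempty (fun i _ => hD i) (fun i _ => htail_nonneg (X i))
  refine hsum.of_isTheta ?_ (htail_nonneg _) (isTheta_tailP_maxRV_sum μ X atTop)
  exact .of_forall fun x => Finset.sum_nonneg fun i _ => tailP_nonneg μ (X i) x

/-- Lemma 4.1(b), dominated variation case: under (v1), if every
`X_i ∈ 𝓓` then `X_{n:n} ∈ 𝓓`. -/
theorem max_dom_var_of_v1
    {Ω : Type*} [MeasurableSpace Ω] (μ : Measure Ω) [IsProbabilityMeasure μ]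
    {n : ℕ} [NeZero n] (X : Fin n → Ω → ℝ) (hXm : ∀ i, Measurable (X i))
    (hv1 : CondV1 μ X)
    (hD : ∀ i, DomVarFun (tailP μ (X i))) :
    DomVarFun (tailP μ (maxRV X)) :=
  max_dom_var_of_v1_general μ X hD
end

section
/- Let F be a distribution function whose tail is regularly varying: (1−F)(x) ~ l(x) x^{−α} as x → ∞ for some α ≥ 0 and some slowly varying function l (in particular F is long-tailed). Then for every p ∈ (0,1) and every β ∈ (−1,1), the function h(x) = x^p (1 + β sin x) belongs to 𝓗*_F; that is, h is eventually positive, h(x) → ∞, h(x) = o(x), (1−F)(x + y h(x)) ~ (1−F)(x) for every y ∈ ℝ, and h is weakly self-neglecting (limsup_{x→∞} h(x + y h(x))/h(x) < ∞ for every y ∈ ℝ). -/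
open MeasureTheory Filter Topology Asymptotics

/-!
Regular variation gives `(1-F)(c x) / (1-F)(x) → c^(-α)` for every `c > 0`, and the limit is
continuous in `c` at `c = 1`. Since `h(x) = x^p (1 + β sin x)` is `Θ(x^p) = o(x)`, the point
`x + y h(x)` lies between `c x` and `c' x` for any `c < 1 < c'` once `x` is large, so monotonicity
of `1-F` squeezes `(1-F)(x + y h(x)) / (1-F)(x)` to `1`. Weak self-neglect holds because
`x + y h(x) ~ x`, hence `h(x + y h(x)) = Θ((x + y h(x))^p) = Θ(x^p) = Θ(h(x))`.
-/

open Real Set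

lemma eventually_pos_of_tendsto_div_mul_rpow {T l : ℝ → ℝ} {ρ : ℝ}
    (hlpos : ∀ᶠ x in atTop, 0 < l x)
    (hreg : Tendsto (fun x => T x / (l x * x ^ ρ)) atTop (𝓝 1)) :
    ∀ᶠ x in atTop, 0 < T x := by
  filter_upwards [hreg.eventually_const_lt one_pos, hlpos, eventually_gt_atTop 0]
    with x hx hlx hx0
  exact (div_pos_iff_of_pos_right (mul_pos hlx (rpow_pos_of_pos hx0 ρ))).mp hx

lemma tendsto_comp_mul_div_self_of_slowlyVarying {T l : ℝ → ℝ} {ρ : ℝ}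
    (hlpos : ∀ᶠ x in atTop, 0 < l x)
    (hl : ∀ y : ℝ, 0 < y → Tendsto (fun x => l (x * y) / l x) atTop (𝓝 1))
    (hreg : Tendsto (fun x => T x / (l x * x ^ ρ)) atTop (𝓝 1)) {c : ℝ} (hc : 0 < c) :
    Tendsto (fun x => T (c * x) / T x) atTop (𝓝 (c ^ ρ)) := by
  have hcx : Tendsto (fun x : ℝ => c * x) atTop atTop := tendsto_id.const_mul_atTop hc
  have hlc : Tendsto (fun x => l (c * x) / l x) atTop (𝓝 1) :=
    (hl c hc).congr fun x => by rw [mul_comm]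
  have hreg' : Tendsto (fun x => l x * x ^ ρ / T x) atTop (𝓝 1) := by
    simpa only [inv_div, inv_one] using hreg.inv₀ one_ne_zero
  have hlim := (((hreg.comp hcx).mul hlc).mul hreg').const_mul (c ^ ρ)
  rw [mul_one, mul_one, mul_one] at hlim
  refine hlim.congr' ?_
  filter_upwards [hlpos, hcx.eventually hlpos, eventually_pos_of_tendsto_div_mul_rpow hlpos hreg,
    eventually_gt_atTop 0]
    with x hlx hlcx hTx hx
  simp only [Function.comp, mul_rpow hc.le hx.le]
  field_simp

lemma eventually_mul_le_add_le_mul_of_isLittleO {g : ℝ → ℝ} (hg : g =o[atTop] fun x => x)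
    {a b : ℝ} (ha : a < 1) (hb : 1 < b) :
    ∀ᶠ x in atTop, a * x ≤ x + g x ∧ x + g x ≤ b * x := by
  have hδ : 0 < min (1 - a) (b - 1) := lt_min (by linarith) (by linarith)
  filter_upwards [hg.def hδ, eventually_ge_atTop 0] with x hgx hx
  rw [norm_eq_abs, norm_eq_abs, abs_of_nonneg hx] at hgx
  have h1 := mul_le_mul_of_nonneg_right (min_le_left (1 - a) (b - 1)) hx
  have h2 := mul_le_mul_of_nonneg_right (min_le_right (1 - a) (b - 1)) hx
  have h3 := abs_le.mp hgx
  constructor <;> nlinarith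

lemma tendsto_comp_add_div_self_of_isLittleO {T g : ℝ → ℝ} {ρ : ℝ} (hT : Antitone T)
    (hTpos : ∀ᶠ x in atTop, 0 < T x)
    (hreg : ∀ c : ℝ, 0 < c → Tendsto (fun x => T (c * x) / T x) atTop (𝓝 (c ^ ρ)))
    (hg : g =o[atTop] fun x => x) :
    Tendsto (fun x => T (x + g x) / T x) atTop (𝓝 1) := by
  have hcont : Tendsto (fun c : ℝ => c ^ ρ) (𝓝 1) (𝓝 1) := by
    simpa using (continuousAt_rpow_const 1 ρ (Or.inl one_ne_zero)).tendsto
  rw [tendsto_order]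
  refine ⟨fun a ha => ?_, fun b hb => ?_⟩
  · obtain ⟨c, hac, hc⟩ : ∃ c, a < c ^ ρ ∧ 1 < c :=
      ((hcont.eventually (lt_mem_nhds ha)).filter_mono nhdsWithin_le_nhds
        |>.and (self_mem_nhdsWithin (s := Ioi 1))).exists
    filter_upwards [(hreg c (by linarith)).eventually (lt_mem_nhds hac), hTpos,
      eventually_mul_le_add_le_mul_of_isLittleO hg zero_lt_one hc] with x hx hTx hgx
    exact hx.trans_le (div_le_div_of_nonneg_right (hT hgx.2) hTx.le)
  · obtain ⟨c, hbc, hc⟩ : ∃ c, c ^ ρ < b ∧ c ∈ Ioo 0 1 :=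
      ((hcont.eventually (gt_mem_nhds hb)).filter_mono nhdsWithin_le_nhds
        |>.and (Ioo_mem_nhdsLT zero_lt_one)).exists
    filter_upwards [(hreg c hc.1).eventually (gt_mem_nhds hbc), hTpos,
      eventually_mul_le_add_le_mul_of_isLittleO hg hc.2 one_lt_two] with x hx hTx hgx
    exact (div_le_div_of_nonneg_right (hT hgx.1) hTx.le).trans_lt hx

lemma limsup_coe_div_lt_top_of_isBigO {α : Type*} {l : Filter α} {f g : α → ℝ}
    (hfg : f =O[l] g) : l.limsup (fun x => ((f x / g x : ℝ) : EReal)) < ⊤ := by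
  obtain ⟨C, hC, hbound⟩ := hfg.exists_nonneg
  have hev : ∀ᶠ x in l, ((f x / g x : ℝ) : EReal) ≤ (C : EReal) := by
    filter_upwards [hbound.bound] with x hx
    rw [EReal.coe_le_coe_iff]
    calc f x / g x ≤ |f x / g x| := le_abs_self _
      _ = ‖f x‖ / ‖g x‖ := abs_div _ _
      _ ≤ C := div_le_of_le_mul₀ (norm_nonneg _) hC hx
  exact (limsup_le_of_le (by isBoundedDefault) hev).trans_lt (EReal.coe_lt_top C)

lemma isBigO_comp_add_mul_self_of_isTheta_rpow {h : ℝ → ℝ} {p : ℝ} (hp : 0 ≤ p)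
    (hΘ : h =Θ[atTop] fun x => x ^ p) (ho : h =o[atTop] fun x => x) (y : ℝ) :
    (fun x => h (x + y * h x)) =O[atTop] h := by
  have hz : (fun x => x + y * h x) ~[atTop] fun x => x :=
    IsEquivalent.refl.add_isLittleO (ho.const_mul_left y)
  calc (fun x => h (x + y * h x)) =O[atTop] fun x => (x + y * h x) ^ p :=
        hΘ.isBigO.comp_tendsto (hz.symm.tendsto_atTop tendsto_id)
    _ =O[atTop] fun x => x ^ p := hz.isBigO.rpow hp (eventually_ge_atTop 0)
    _ =O[atTop] h := hΘ.symm.isBigO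

lemma isLittleO_rpow_self {p : ℝ} (hp : p < 1) :
    (fun x : ℝ => x ^ p) =o[atTop] fun x => x := by
  rw [isLittleO_iff_tendsto' ((eventually_gt_atTop 0).mono fun x hx h0 => (hx.ne' h0).elim)]
  have hlim := tendsto_rpow_neg_atTop (sub_pos.2 hp)
  rw [neg_sub] at hlim
  refine hlim.congr' ?_
  filter_upwards [eventually_gt_atTop 0] with x hx
  rw [rpow_sub hx, rpow_one]

lemma abs_mul_sin_le (β x : ℝ) : |β * sin x| ≤ |β| := by
  rw [abs_mul]
  exact mul_le_of_le_one_right (abs_nonneg β) (abs_sin_le_one x)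

lemma isTheta_one_add_mul_sin {β : ℝ} (hβ : |β| < 1) :
    (fun x => 1 + β * sin x) =Θ[atTop] fun _ => (1 : ℝ) := by
  refine ⟨.of_bound (1 + |β|) (.of_forall fun x => ?_),
    .of_bound (1 - |β|)⁻¹ (.of_forall fun x => ?_)⟩
  · have := abs_le.mp (abs_mul_sin_le β x)
    rw [norm_one, mul_one, norm_eq_abs, abs_le]
    constructor <;> linarith
  · have := abs_le.mp (abs_mul_sin_le β x)
    rw [norm_one, norm_eq_abs, abs_of_pos (a := 1 + β * sin x) (by linarith), inv_mul_eq_div,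
      le_div_iff₀ (by linarith)]
    linarith

theorem scale_class_of_reg_var_tail_general
    (F : ℝ → ℝ) (hmono : Monotone F)
    (α : ℝ)
    (l : ℝ → ℝ) (hlpos : ∀ᶠ x in atTop, 0 < l x)
    (hl : ∀ y : ℝ, 0 < y → Tendsto (fun x => l (x * y) / l x) atTop (𝓝 1))
    (hreg : Tendsto (fun x => (1 - F x) / (l x * x ^ (-α))) atTop (𝓝 1)) :
    ∀ p : ℝ, 0 < p → p < 1 → ∀ β : ℝ, -1 < β → β < 1 →
      MemScaleClass (fun x => 1 - F x) (fun x => x ^ p * (1 + β * Real.sin x)) ∧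
        Tendsto (fun x => x ^ p * (1 + β * Real.sin x)) atTop atTop := by
  intro p hp0 hp1 β hβ1 hβ2
  have hβ : |β| < 1 := abs_lt.mpr ⟨hβ1, hβ2⟩
  have hfac : ∀ x, 1 - |β| ≤ 1 + β * sin x := fun x => by
    linarith [(abs_le.mp (abs_mul_sin_le β x)).1]
  have hΘ : (fun x => x ^ p * (1 + β * sin x)) =Θ[atTop] fun x => x ^ p := by
    simpa only [mul_one] using (isTheta_refl (fun x : ℝ => x ^ p) atTop).mul
      (isTheta_one_add_mul_sin hβ)
  have ho := hΘ.isBigO.trans_isLittleO (isLittleO_rpow_self hp1)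
  refine ⟨⟨?_, ho, fun y => ?_, fun y => ?_⟩, ?_⟩
  · filter_upwards [eventually_gt_atTop 0] with x hx
    exact mul_pos (rpow_pos_of_pos hx p) (by linarith [hfac x])
  · exact tendsto_comp_add_div_self_of_isLittleO (fun a b hab => sub_le_sub_left (hmono hab) 1)
      (eventually_pos_of_tendsto_div_mul_rpow hlpos hreg)
      (fun c hc => tendsto_comp_mul_div_self_of_slowlyVarying hlpos hl hreg hc)
      (ho.const_mul_left y)
  · exact limsup_coe_div_lt_top_of_isBigO
      (isBigO_comp_add_mul_self_of_isTheta_rpow hp0.le hΘ ho y)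
  · refine tendsto_atTop_mono' atTop ?_
      ((tendsto_rpow_atTop hp0).const_mul_atTop (by linarith : 0 < 1 - |β|))
    filter_upwards [eventually_ge_atTop 0] with x hx
    nlinarith [hfac x, rpow_nonneg hx p]

/-- if `F` has a regularly varying tail `(1-F)(x) ~ l(x) x^{-α}` with
`α ≥ 0` and `l` slowly varying, then `x ↦ x^p (1 + β sin x) ∈ 𝓗*_F` for all
`p ∈ (0,1)` and `β ∈ (-1,1)`. -/
theorem scale_class_of_reg_var_tail
    (F : ℝ → ℝ) (hmono : Monotone F)
    (hbot : Tendsto F atBot (𝓝 0)) (htop : Tendsto F atTop (𝓝 1))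
    (α : ℝ) (hα : 0 ≤ α)
    (l : ℝ → ℝ) (hlpos : ∀ᶠ x in atTop, 0 < l x)
    (hl : ∀ y : ℝ, 0 < y → Tendsto (fun x => l (x * y) / l x) atTop (𝓝 1))
    (hreg : Tendsto (fun x => (1 - F x) / (l x * x ^ (-α))) atTop (𝓝 1)) :
    ∀ p : ℝ, 0 < p → p < 1 → ∀ β : ℝ, -1 < β → β < 1 →
      MemScaleClass (fun x => 1 - F x) (fun x => x ^ p * (1 + β * Real.sin x)) ∧
        Tendsto (fun x => x ^ p * (1 + β * Real.sin x)) atTop atTop :=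
  scale_class_of_reg_var_tail_general F hmono α l hlpos hl hreg
end
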